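/- Let V_P = {±e_i} ∪ {(±1/2,…,±1/2)} ⊆ ℝⁿ (n ≥ 4) and ‖x‖_P = max_{i≠j}(|x_i|+|x_j|). For any v, v' ∈ V_P, either v+v' = 0, or v+v' ∈ V_P, or ‖v+v'‖_P = 2. -/

import Mathlib

open Set Filter MeasureTheory Pointwise

/-- The lattice `Dₙ = {x ∈ ℤⁿ : ∑ xᵢ even}`. -/
def Dlat (n : ℕ) : Set (Fin n → ℝ) :=
  {x | (∀ i, ∃ m : ℤ, x i = (m : ℝ)) ∧ ∃ k : ℤ, ∑ i, x i = 2 * (k : ℝ)}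

/-- The Voronoï region of `Dₙ`. -/
def VorDn (n : ℕ) : Set (Fin n → ℝ) :=
  {z | ∀ x ∈ Dlat n, ∑ i, (z i) ^ 2 ≤ ∑ i, (z i - x i) ^ 2}

/-- The norm `‖x‖ = max_{i ≠ j} (|xᵢ| + |xⱼ|)` (whose unit ball is the Voronoï
region of `Dₙ`). -/
noncomputable def DnNorm (n : ℕ) (x : Fin n → ℝ) : ℝ :=
  sSup {r : ℝ | ∃ i j, i ≠ j ∧ r = |x i| + |x j|}

/-- The vertex set of the Voronoï region of `Dₙ`: the `2n` vectors `±eᵢ` and the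
`2ⁿ` vectors `(±1/2, …, ±1/2)`. -/
def VPDn (n : ℕ) : Set (Fin n → ℝ) :=
  {v | ∃ i, v = Pi.single i (1 : ℝ) ∨ v = -Pi.single i (1 : ℝ)} ∪
    {v | ∀ i, v i = 1 / 2 ∨ v i = -(1 / 2)}

/-!
Write the vertices as `Pi.single i s` with `|s| = 1` and as vectors with all `|vₖ| = 1/2`.
A sum of two vertices then has coordinates of very few shapes: either it vanishes, or it is
again a vertex (a single `±1`, or `±1/2` everywhere after a sign cancellation at one
coordinate), or its two largest coordinates in absolute value are `2 + 0`, `3/2 + 1/2` or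
`1 + 1`, with no other pair exceeding them.
-/

section

variable {n : ℕ}

namespace DnNorm

variable {x : Fin n → ℝ}

theorem eq_of_abs_add_abs_eq_of_le {c : ℝ} {i j : Fin n} (hij : i ≠ j)
    (hc : |x i| + |x j| = c) (hle : ∀ a b, a ≠ b → |x a| + |x b| ≤ c) : DnNorm n x = c :=
  IsGreatest.csSup_eq
    ⟨⟨i, j, hij, hc.symm⟩, by rintro _ ⟨a, b, hab, rfl⟩; exact hle a b hab⟩

theorem eq_add_of_abs_eq_of_forall_ne (hn : 2 ≤ n) {a b : ℝ} (hba : b ≤ a) (i : Fin n)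
    (hi : |x i| = a) (hoff : ∀ k, k ≠ i → |x k| = b) : DnNorm n x = a + b := by
  have := Fin.nontrivial_iff_two_le.mpr hn
  obtain ⟨j, hji⟩ := exists_ne i
  refine eq_of_abs_add_abs_eq_of_le hji.symm (by rw [hi, hoff j hji]) fun k l hkl => ?_
  rcases eq_or_ne k i with rfl | hk
  · rw [hi, hoff l hkl.symm]
  · rcases eq_or_ne l i with rfl | hl
    · rw [hoff k hk, hi, add_comm]
    · rw [hoff k hk, hoff l hl]; linarith

theorem eq_two_of_abs_le_one (hx : ∀ k, |x k| ≤ 1) {i j : Fin n} (hij : i ≠ j)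
    (hi : |x i| = 1) (hj : |x j| = 1) : DnNorm n x = 2 :=
  eq_of_abs_add_abs_eq_of_le hij (by rw [hi, hj]; norm_num) fun a b _ => by linarith [hx a, hx b]

end DnNorm

theorem mem_VPDn_iff {v : Fin n → ℝ} :
    v ∈ VPDn n ↔ (∃ i s, |s| = 1 ∧ v = Pi.single i s) ∨ ∀ k, |v k| = 1 / 2 := by
  simp only [VPDn, mem_union, mem_ofPred_eq, abs_eq (by norm_num : (0 : ℝ) ≤ 1 / 2),
    abs_eq (zero_le_one' ℝ), ← Pi.single_neg]
  constructor
  · rintro (⟨i, rfl | rfl⟩ | h)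
    exacts [Or.inl ⟨i, 1, Or.inl rfl, rfl⟩, Or.inl ⟨i, -1, Or.inr rfl, rfl⟩, Or.inr h]
  · rintro (⟨i, s, rfl | rfl, rfl⟩ | h)
    exacts [Or.inl ⟨i, Or.inl rfl⟩, Or.inl ⟨i, Or.inr rfl⟩, Or.inr h]

theorem single_add_single_eq_zero_or_DnNorm_eq_two (hn : 2 ≤ n) (i j : Fin n) {s t : ℝ}
    (hs : |s| = 1) (ht : |t| = 1) :
    (Pi.single i s + Pi.single j t : Fin n → ℝ) = 0 ∨
      DnNorm n (Pi.single i s + Pi.single j t) = 2 := by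
  rcases eq_or_ne i j with rfl | hij
  · rw [← Pi.single_add]
    have hst : s + t = 0 ∨ |s + t| = 2 := by
      rw [abs_eq zero_le_one] at hs ht
      rcases hs with rfl | rfl <;> rcases ht with rfl | rfl <;> norm_num
    rcases hst with h0 | h2
    · exact Or.inl (by rw [h0, Pi.single_zero])
    · right
      simpa using DnNorm.eq_add_of_abs_eq_of_forall_ne (x := Pi.single i (s + t)) hn
        zero_le_two i (by simpa using h2) fun k hk => by simp [hk]
  · right
    refine DnNorm.eq_two_of_abs_le_one (fun k => ?_) hij (by simp [hij, hs])
      (by simp [hij.symm, ht])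
    rcases eq_or_ne k i with rfl | hki
    · simp [hij, hs]
    · rcases eq_or_ne k j with rfl | hkj
      · simp [hki, ht]
      · simp [hki, hkj]

theorem single_add_half_eq_half_or_DnNorm_eq_two (hn : 2 ≤ n) (i : Fin n) {s : ℝ}
    (hs : |s| = 1) {v : Fin n → ℝ} (hv : ∀ k, |v k| = 1 / 2) :
    (∀ k, |(Pi.single i s + v : Fin n → ℝ) k| = 1 / 2) ∨
      DnNorm n (Pi.single i s + v) = 2 := by
  have hoff : ∀ k, k ≠ i → |(Pi.single i s + v : Fin n → ℝ) k| = 1 / 2 := fun k hk => by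
    simp [hk, hv k]
  have hsv : |s + v i| = 1 / 2 ∨ |s + v i| = 3 / 2 := by
    have := hv i
    rw [abs_eq zero_le_one] at hs
    rw [abs_eq (by norm_num)] at this
    rcases hs with rfl | rfl <;> rcases this with h | h <;> rw [h] <;> norm_num [abs_of_neg]
  rcases hsv with h | h
  · left
    intro k
    rcases eq_or_ne k i with rfl | hk
    · simpa using h
    · exact hoff k hk
  · right
    rw [DnNorm.eq_add_of_abs_eq_of_forall_ne (a := 3 / 2) hn (by norm_num) i
      (by simpa using h) hoff]
    norm_num

theorem half_add_half_trichotomy {v w : Fin n → ℝ} (hv : ∀ k, |v k| = 1 / 2)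
    (hw : ∀ k, |w k| = 1 / 2) :
    v + w = 0 ∨ (∃ i s, |s| = 1 ∧ v + w = Pi.single i s) ∨ DnNorm n (v + w) = 2 := by
  set x := v + w
  have hx : ∀ k, x k = 0 ∨ |x k| = 1 := fun k => by
    have hvk := hv k
    have hwk := hw k
    rw [abs_eq (by norm_num)] at hvk hwk
    simp only [x, Pi.add_apply]
    rcases hvk with h | h <;> rcases hwk with h' | h' <;> rw [h, h'] <;> norm_num
  have hle : ∀ k, |x k| ≤ 1 := fun k => by rcases hx k with h | h <;> simp [h]
  by_cases hzero : ∀ k, x k = 0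
  · exact Or.inl (funext hzero)
  push Not at hzero
  obtain ⟨i, hi⟩ := hzero
  have hxi : |x i| = 1 := (hx i).resolve_left hi
  by_cases hsingle : ∀ k, k ≠ i → x k = 0
  · refine Or.inr (Or.inl ⟨i, x i, hxi, funext fun k => ?_⟩)
    rcases eq_or_ne k i with rfl | hk
    · simp
    · simp [hk, hsingle k hk]
  push Not at hsingle
  obtain ⟨j, hji, hj⟩ := hsingle
  exact Or.inr (Or.inr (DnNorm.eq_two_of_abs_le_one hle hji.symm hxi ((hx j).resolve_left hj)))

end

theorem sum_of_vertices_trichotomy_Dn (n : ℕ) (hn : 4 ≤ n)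
    (v v' : Fin n → ℝ) (hv : v ∈ VPDn n) (hv' : v' ∈ VPDn n) :
    v + v' = 0 ∨ v + v' ∈ VPDn n ∨ DnNorm n (v + v') = 2 := by
  have hn2 : 2 ≤ n := by omega
  rw [mem_VPDn_iff] at hv hv' ⊢
  rcases hv with ⟨i, s, hs, rfl⟩ | hv <;> rcases hv' with ⟨j, t, ht, rfl⟩ | hv'
  · rcases single_add_single_eq_zero_or_DnNorm_eq_two hn2 i j hs ht with h | h
    exacts [Or.inl h, Or.inr (Or.inr h)]
  · rcases single_add_half_eq_half_or_DnNorm_eq_two hn2 i hs hv' with h | h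
    exacts [Or.inr (Or.inl (Or.inr h)), Or.inr (Or.inr h)]
  · rw [add_comm]
    rcases single_add_half_eq_half_or_DnNorm_eq_two hn2 j ht hv with h | h
    exacts [Or.inr (Or.inl (Or.inr h)), Or.inr (Or.inr h)]
  · rcases half_add_half_trichotomy hv hv' with h | h | h
    exacts [Or.inl h, Or.inr (Or.inl (Or.inl h)), Or.inr (Or.inr h)]
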